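/- arXiv:cs/0610155 — 6 statements merged into one kernel-verified Lean document; each statement's English description precedes it below -/
import Mathlib

section
/- If x is a Cauchy random variable with location 0 and scale d > 0, then Var(log|x|) = π²/4, i.e., E((log|x|)²) = (log d)² + π²/4. -/
/-!
Substituting `x = d eᵛ` on each half-line turns the Cauchy density into `1 / (2π cosh v)`, so
`E((log|x|)²) = π⁻¹ ∫ (v + log d)² / cosh v`. The odd term vanishes and `∫ 1 / cosh = π`
(a primitive is `arctan ∘ sinh`). Expanding `1 / cosh v = 2 ∑ (-1)ᵐ e^{-(2m+1)v}` for `v > 0` and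
integrating term by term gives `∫ v² / cosh v = 8 ∑ (-1)ᵐ / (2m+1)³ = π³ / 4`, the last sum being
the value `L(χ₄, 3) = π³ / 32`.
-/

open Real MeasureTheory Set Filter Asymptotics
open scoped Nat

lemma integral_pow_mul_exp_neg_mul_Ioi (k : ℕ) {r : ℝ} (hr : 0 < r) :
    ∫ u in Ioi (0 : ℝ), u ^ k * exp (-(r * u)) = k ! / r ^ (k + 1) := by
  have h := integral_rpow_mul_exp_neg_mul_Ioi (a := k + 1) (by positivity) hr
  rw [Gamma_nat_eq_factorial, div_rpow zero_le_one hr.le, one_rpow, add_sub_cancel_right,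
    ← Nat.cast_succ, rpow_natCast] at h
  simp only [rpow_natCast] at h
  rw [h, one_div_mul_eq_div]

lemma integrableOn_pow_mul_exp_neg_mul_Ioi (k : ℕ) {r : ℝ} (hr : 0 < r) :
    IntegrableOn (fun u : ℝ => u ^ k * exp (-(r * u))) (Ioi 0) :=
  .of_integral_ne_zero <| by rw [integral_pow_mul_exp_neg_mul_Ioi k hr]; positivity

lemma summable_one_div_two_mul_add_one_pow {p : ℕ} (hp : 1 < p) :
    Summable fun m : ℕ => 1 / (2 * m + 1 : ℝ) ^ p := by
  refine ((summable_nat_add_iff 1).mpr (summable_one_div_nat_pow.mpr hp)).of_nonneg_of_le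
    (fun m => by positivity) fun m => ?_
  gcongr
  push_cast
  linarith [(m.cast_nonneg : (0 : ℝ) ≤ m)]

lemma hasSum_alternating_div_odd_cube :
    HasSum (fun m : ℕ => (-1) ^ m / (2 * m + 1 : ℝ) ^ 3) (π ^ 3 / 32) := by
  have hodd : Function.Injective fun m : ℕ => 2 * m + 1 := fun a b h => by simp only at h; omega
  have hvanish : ∀ n ∉ range fun m : ℕ => 2 * m + 1,
      (1 : ℝ) / (n : ℝ) ^ 3 * sin (π * n / 2) = 0 := by
    intro n hn
    obtain ⟨m, rfl⟩ : Even n := by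
      rw [← Nat.not_odd_iff_even]; rintro ⟨m, rfl⟩; exact hn ⟨m, rfl⟩
    rw [Nat.cast_add, show π * (m + m : ℝ) / 2 = m * π by ring, sin_nat_mul_pi, mul_zero]
  refine ((hodd.hasSum_iff hvanish).mpr hasSum_L_function_mod_four_eval_three).congr_fun
    fun m => ?_
  rw [Function.comp_apply, Nat.cast_add_one, Nat.cast_mul, Nat.cast_ofNat,
    show π * (2 * m + 1 : ℝ) / 2 = π / 2 + m * π by ring, sin_add_nat_mul_pi, sin_pi_div_two]
  ring

lemma inv_cosh_le_two_mul_exp_neg (v : ℝ) : (cosh v)⁻¹ ≤ 2 * exp (-v) := by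
  rw [exp_neg, ← div_eq_mul_inv, inv_le_comm₀ (cosh_pos v) (by positivity), inv_div, cosh_eq]
  linarith [exp_pos (-v)]

lemma integrable_pow_div_cosh (k : ℕ) : Integrable fun v : ℝ => v ^ k / cosh v := by
  have hcont : Continuous fun v : ℝ => v ^ k / cosh v :=
    (continuous_pow k).div continuous_cosh fun v => (cosh_pos v).ne'
  refine hcont.locallyIntegrable.integrable_of_isBigO_atTop_of_norm_isNegInvariant
    (g := fun v => v ^ k * exp (-(1 * v))) (.of_forall fun v => ?_) ?_
    ⟨Ioi 0, Ioi_mem_atTop 0, integrableOn_pow_mul_exp_neg_mul_Ioi k one_pos⟩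
  · simp [norm_div, cosh_neg]
  · refine IsBigO.of_bound 2 (.of_forall fun v => ?_)
    rw [norm_div, norm_mul, norm_of_nonneg (cosh_pos v).le, norm_of_nonneg (exp_pos _).le,
      one_mul, div_eq_mul_inv, mul_left_comm]
    exact mul_le_mul_of_nonneg_left (inv_cosh_le_two_mul_exp_neg v) (norm_nonneg _)

lemma hasDerivAt_arctan_sinh (v : ℝ) : HasDerivAt (fun u => arctan (sinh u)) (cosh v)⁻¹ v := by
  refine ((hasDerivAt_arctan (sinh v)).comp v (hasDerivAt_sinh v)).congr_deriv ?_
  rw [← cosh_sq', sq, one_div, mul_inv, inv_mul_cancel_right₀ (cosh_pos v).ne']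

lemma integral_inv_cosh : ∫ v : ℝ, (cosh v)⁻¹ = π := by
  have hbot : Tendsto sinh atBot atBot :=
    tendsto_atBot_mono' atBot ((eventually_le_atBot 0).mono fun x => sinh_le_self_iff.mpr)
      tendsto_id
  have htop : Tendsto sinh atTop atTop :=
    tendsto_atTop_mono' atTop ((eventually_ge_atTop 0).mono fun x => self_le_sinh_iff.mpr)
      tendsto_id
  rw [integral_of_hasDerivAt_of_tendsto hasDerivAt_arctan_sinh
    (by simpa using integrable_pow_div_cosh 0)
    ((tendsto_arctan_atBot.mono_right nhdsWithin_le_nhds).comp hbot)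
    ((tendsto_arctan_atTop.mono_right nhdsWithin_le_nhds).comp htop)]
  ring

lemma integral_id_div_cosh : ∫ v : ℝ, v / cosh v = 0 := by
  have h := integral_neg_eq_self (fun v : ℝ => v / cosh v) volume
  simp only [cosh_neg, neg_div, integral_neg] at h
  linarith

lemma hasSum_inv_cosh {u : ℝ} (hu : 0 < u) :
    HasSum (fun m : ℕ => 2 * (-1) ^ m * exp (-((2 * m + 1) * u))) (cosh u)⁻¹ := by
  have hq : ‖-exp (-(2 * u))‖ < 1 := by
    rw [norm_neg, norm_of_nonneg (exp_pos _).le, exp_lt_one_iff]; linarith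
  have hcosh : (cosh u)⁻¹ = 2 * exp (-u) * (1 - -exp (-(2 * u)))⁻¹ := by
    rw [cosh_eq, sub_neg_eq_add, show -(2 * u) = -u + -u by ring, exp_add]
    field_simp
    rw [mul_add, ← exp_add, neg_add_cancel, exp_zero, sq]
  rw [hcosh]
  refine ((hasSum_geometric_of_norm_lt_one hq).mul_left (2 * exp (-u))).congr_fun fun m => ?_
  rw [neg_pow (exp _), ← exp_nat_mul, show -((2 * m + 1) * u) = -u + m * -(2 * u) by ring,
    exp_add]
  ring

lemma hasSum_integral_Ioi_pow_div_cosh {k : ℕ} (hk : k ≠ 0) :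
    HasSum (fun m : ℕ => 2 * k ! * ((-1) ^ m / (2 * m + 1 : ℝ) ^ (k + 1)))
      (∫ u in Ioi 0, u ^ k / cosh u) := by
  set F : ℕ → ℝ → ℝ := fun m u => 2 * (-1) ^ m * (u ^ k * exp (-((2 * m + 1) * u)))
  have hr (m : ℕ) : (0 : ℝ) < 2 * m + 1 := by positivity
  have hF_int (m : ℕ) : IntegrableOn (F m) (Ioi 0) :=
    (integrableOn_pow_mul_exp_neg_mul_Ioi k (hr m)).const_mul _
  have hF_integral (m : ℕ) :
      ∫ u in Ioi 0, F m u = 2 * k ! * ((-1) ^ m / (2 * m + 1) ^ (k + 1)) := by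
    rw [integral_const_mul, integral_pow_mul_exp_neg_mul_Ioi k (hr m)]
    ring
  have hF_norm (m : ℕ) : ∫ u in Ioi 0, ‖F m u‖ = 2 * k ! * (1 / (2 * m + 1) ^ (k + 1)) := by
    have hnorm : ∀ u ∈ Ioi (0 : ℝ), ‖F m u‖ = 2 * (u ^ k * exp (-((2 * m + 1) * u))) :=
      fun u hu => by simp [F, norm_mul, abs_of_pos (mem_Ioi.mp hu)]
    rw [setIntegral_congr_fun measurableSet_Ioi hnorm, integral_const_mul,
      integral_pow_mul_exp_neg_mul_Ioi k (hr m)]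
    ring
  have hF_sum : ∀ u ∈ Ioi (0 : ℝ), ∑' m, F m u = u ^ k / cosh u := fun u hu => by
    rw [div_eq_mul_inv, ← ((hasSum_inv_cosh hu).mul_left (u ^ k)).tsum_eq]
    exact tsum_congr fun m => by ring
  rw [← setIntegral_congr_fun measurableSet_Ioi hF_sum]
  refine (hasSum_integral_of_summable_integral_norm hF_int ?_).congr_fun
    fun m => (hF_integral m).symm
  simp_rw [hF_norm]
  exact (summable_one_div_two_mul_add_one_pow (by omega)).mul_left _

lemma integral_sq_div_cosh : ∫ v : ℝ, v ^ 2 / cosh v = π ^ 3 / 4 := by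
  have h := integral_comp_abs (f := fun v => v ^ 2 / cosh v)
  simp only [sq_abs, cosh_abs] at h
  rw [h, (hasSum_integral_Ioi_pow_div_cosh two_ne_zero).unique
    (hasSum_alternating_div_odd_cube.mul_left (2 * (2 ! : ℝ)))]
  norm_num [Nat.factorial]
  ring

lemma integral_add_sq_div_cosh (c : ℝ) :
    ∫ v : ℝ, (v + c) ^ 2 / cosh v = (∫ v : ℝ, v ^ 2 / cosh v) + c ^ 2 * ∫ v : ℝ, (cosh v)⁻¹ := by
  have hexpand (v : ℝ) : (v + c) ^ 2 / cosh v
      = (v ^ 2 / cosh v + 2 * c * (v ^ 1 / cosh v)) + c ^ 2 * (v ^ 0 / cosh v) := by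
    ring
  simp_rw [hexpand]
  have h2 := integrable_pow_div_cosh 2
  have h1 := (integrable_pow_div_cosh 1).const_mul (2 * c)
  have h0 := (integrable_pow_div_cosh 0).const_mul (c ^ 2)
  rw [integral_add (by exact h2.add h1) h0, integral_add h2 h1, integral_const_mul,
    integral_const_mul]
  simp [integral_id_div_cosh]

lemma integral_cauchy_density_mul_comp_log_abs {d : ℝ} (hd : 0 < d) (g : ℝ → ℝ) :
    ∫ x : ℝ, d / (π * (x ^ 2 + d ^ 2)) * g (log |x|)
      = π⁻¹ * ∫ v : ℝ, g (v + log d) / cosh v := by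
  set ρ : ℝ → ℝ := fun t => d / (π * (t ^ 2 + d ^ 2)) * g (log t)
  have hjacobian (v : ℝ) :
      exp (v + log d) * ρ (exp (v + log d)) = π⁻¹ * (g (v + log d) / cosh v / 2) := by
    simp only [ρ, log_exp]
    simp only [exp_add, exp_log hd, cosh_eq, exp_neg]
    field_simp
  calc ∫ x : ℝ, d / (π * (x ^ 2 + d ^ 2)) * g (log |x|)
      = 2 * ∫ t in Ioi 0, ρ t := by simp only [ρ, ← integral_comp_abs, sq_abs]
    _ = 2 * ∫ u : ℝ, exp u * ρ (exp u) := by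
      rw [← range_exp, ← image_univ, integral_image_eq_integral_abs_deriv_smul MeasurableSet.univ
        (fun u _ => (hasDerivAt_exp u).hasDerivWithinAt) exp_injective.injOn, setIntegral_univ]
      simp only [abs_of_pos (exp_pos _), smul_eq_mul]
    _ = π⁻¹ * ∫ v : ℝ, g (v + log d) / cosh v := by
      rw [← integral_add_right_eq_self _ (log d)]
      simp only [hjacobian, integral_const_mul, integral_div]
      ring

/-- Second logarithmic moment of a Cauchy(0, d) random variable:
`E((log|x|)²) = (log d)² + π²/4`, i.e. `Var(log|x|) = π²/4`. -/
theorem cauchy_log_abs_sq_moment (d : ℝ) (hd : 0 < d) :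
    ∫ x : ℝ, (d / (π * (x ^ 2 + d ^ 2))) * (Real.log |x|) ^ 2
      = (Real.log d) ^ 2 + π ^ 2 / 4 := by
  rw [integral_cauchy_density_mul_comp_log_abs hd (· ^ 2), integral_add_sq_div_cosh,
    integral_sq_div_cosh, integral_inv_cosh]
  field_simp
  ring
end

section
/- Let x₁,...,x_k be i.i.d. Cauchy with location 0 and scale d > 0, with k > 2, and let d̂ = cos^k(π/(2k)) · ∏_{j=1}^k |x_j|^{1/k}. Then Var(d̂) = d²·(cos^{2k}(π/(2k)) / cos^k(π/k) − 1). -/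
/-!
The estimator is a constant times a product of the independent factors `|x_j|^{1/k}`, and its
square a constant times the product of the `|x_j|^{2/k}`, so both moments factor into
absolute moments of the Cauchy law: `E|x|^λ = d^λ / cos(λπ/2)` for `|λ| < 1`. After scaling
to `d = 1` and folding the line onto `(0, ∞)`, the substitution `t = x² / (x² + 1)` turns
this moment into the Beta integral `B(s, 1 - s) = Γ(s) Γ(1 - s) = π / sin(πs)` with
`s = (λ + 1) / 2`. With `c = cos(π/(2k))` this gives `E d̂ = d` and
`E d̂² = d² c^{2k} / cos^k(π/k)`.
-/

open Real MeasureTheory ProbabilityTheory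

/-- The Cauchy distribution with location 0 and scale `d`, as a measure on `ℝ`
with density `d / (π (x² + d²))`. -/
noncomputable def cauchyMeasure (d : ℝ) : Measure ℝ :=
  volume.withDensity fun x => ENNReal.ofReal (d / (π * (x ^ 2 + d ^ 2)))

open Set

theorem cos_pi_div_pos {x : ℝ} (hx : 2 < x) : 0 < cos (π / x) :=
  cos_pos_of_mem_Ioo ⟨by linarith [div_pos pi_pos (by linarith : (0 : ℝ) < x), pi_pos],
    div_lt_div_of_pos_left pi_pos two_pos hx⟩

theorem integral_rpow_mul_one_sub_rpow_neg {s : ℝ} (hs₀ : 0 < s) (hs₁ : s < 1) :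
    ∫ t in Ioo (0 : ℝ) 1, t ^ (s - 1) * (1 - t) ^ (-s) = π / sin (π * s) := by
  have hbeta : Complex.betaIntegral s (1 - s) = π / Complex.sin (π * s) := by
    have h := Complex.Gamma_mul_Gamma_eq_betaIntegral (s := s) (t := 1 - s)
      (by simpa using hs₀) (by simpa using hs₁)
    rwa [add_sub_cancel, Complex.Gamma_one, one_mul, Complex.Gamma_mul_Gamma_one_sub,
      eq_comm] at h
  have hreal : ∀ t ∈ Ioo (0 : ℝ) 1,
      (t : ℂ) ^ ((s : ℂ) - 1) * (1 - (t : ℂ)) ^ (1 - (s : ℂ) - 1)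
        = ((t ^ (s - 1) * (1 - t) ^ (-s) : ℝ) : ℂ) := fun t ht => by
    rw [Complex.ofReal_mul, Complex.ofReal_cpow ht.1.le, Complex.ofReal_cpow (sub_pos.2 ht.2).le]
    push_cast
    ring_nf
  rw [Complex.betaIntegral, intervalIntegral.integral_of_le zero_le_one,
    integral_Ioc_eq_integral_Ioo, setIntegral_congr_fun measurableSet_Ioo hreal,
    integral_complex_ofReal] at hbeta
  exact_mod_cast hbeta

theorem image_sq_div_sq_add_one_Ioi :
    (fun y : ℝ => y ^ 2 / (y ^ 2 + 1)) '' Ioi 0 = Ioo 0 1 := by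
  ext t
  constructor
  · rintro ⟨y, hy, rfl⟩
    have hy : 0 < y := hy
    exact ⟨by positivity, (div_lt_one (by positivity)).2 (lt_add_one _)⟩
  · rintro ⟨ht₀, ht₁⟩
    have hq : 0 < t / (1 - t) := div_pos ht₀ (sub_pos.2 ht₁)
    refine ⟨√(t / (1 - t)), sqrt_pos.2 hq, ?_⟩
    have : 1 - t ≠ 0 := (sub_pos.2 ht₁).ne'
    simp only [sq_sqrt hq.le]
    field_simp
    ring

theorem injOn_sq_div_sq_add_one_Ioi : InjOn (fun y : ℝ => y ^ 2 / (y ^ 2 + 1)) (Ioi 0) := by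
  intro a ha b hb hab
  have : a ^ 2 = b ^ 2 := by
    field_simp at hab
    linarith
  exact (pow_left_inj₀ (le_of_lt ha) (le_of_lt hb) two_ne_zero).1 this

theorem integral_rpow_div_sq_add_one {l : ℝ} (hl₀ : -1 < l) (hl₁ : l < 1) :
    ∫ y in Ioi (0 : ℝ), y ^ l / (y ^ 2 + 1) = π / (2 * cos (π * l / 2)) := by
  set φ : ℝ → ℝ := fun y => y ^ 2 / (y ^ 2 + 1)
  set s : ℝ := (l + 1) / 2
  have hderiv : ∀ y ∈ Ioi (0 : ℝ),
      HasDerivWithinAt φ (2 * y / (y ^ 2 + 1) ^ 2) (Ioi 0) y := fun y _ => by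
    have h := ((hasDerivAt_pow 2 y).div ((hasDerivAt_pow 2 y).add_const 1) (by positivity))
    refine (h.congr_deriv ?_).hasDerivWithinAt
    norm_num
    ring
  have hintegrand : ∀ y ∈ Ioi (0 : ℝ), |2 * y / (y ^ 2 + 1) ^ 2| •
      (φ y ^ (s - 1) * (1 - φ y) ^ (-s)) = 2 * (y ^ l / (y ^ 2 + 1)) := by
    intro y hy
    have hy : 0 < y := hy
    have hA : 0 < y ^ 2 + 1 := by positivity
    have hφ : 1 - φ y = (y ^ 2 + 1)⁻¹ := by simp only [φ]; field_simp; ring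
    have hpow : (y ^ 2) ^ (s - 1) = y ^ l / y := by
      rw [← rpow_natCast_mul hy.le, ← rpow_sub_one hy.ne']
      congr 1; simp only [s]; push_cast; ring
    rw [hφ, div_rpow (by positivity) hA.le, hpow, inv_rpow hA.le, rpow_neg hA.le, inv_inv,
      rpow_sub_one hA.ne', abs_of_pos (by positivity), smul_eq_mul]
    have := rpow_pos_of_pos hA s
    field_simp
  have hsin : sin (π * s) = cos (π * l / 2) := by
    rw [show π * s = π * l / 2 + π / 2 by simp only [s]; ring, sin_add_pi_div_two]
  have h := integral_image_eq_integral_abs_deriv_smul measurableSet_Ioi hderiv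
    injOn_sq_div_sq_add_one_Ioi (fun t => t ^ (s - 1) * (1 - t) ^ (-s))
  have hs₀ : 0 < s := by simp only [s]; linarith
  have hs₁ : s < 1 := by simp only [s]; linarith
  rw [image_sq_div_sq_add_one_Ioi, integral_rpow_mul_one_sub_rpow_neg hs₀ hs₁, hsin,
    setIntegral_congr_fun measurableSet_Ioi hintegrand, integral_const_mul] at h
  rw [mul_comm 2, ← div_div, h]
  ring

theorem integral_rpow_div_sq_add_sq {l d : ℝ} (hl₀ : -1 < l) (hl₁ : l < 1) (hd : 0 < d) :
    ∫ x in Ioi (0 : ℝ), x ^ l / (x ^ 2 + d ^ 2)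
      = d ^ (l - 1) * π / (2 * cos (π * l / 2)) := by
  have hscale : ∀ y ∈ Ioi (0 : ℝ), (d * y) ^ l / ((d * y) ^ 2 + d ^ 2)
      = d ^ (l - 2) * (y ^ l / (y ^ 2 + 1)) := fun y hy => by
    rw [mul_rpow hd.le (le_of_lt hy), rpow_sub hd, rpow_two]
    field_simp
  have h := integral_comp_mul_left_Ioi (fun x => x ^ l / (x ^ 2 + d ^ 2)) 0 hd
  rw [mul_zero, setIntegral_congr_fun measurableSet_Ioi hscale, integral_const_mul,
    integral_rpow_div_sq_add_one hl₀ hl₁, smul_eq_mul, eq_inv_mul_iff_mul_eq₀ hd.ne'] at h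
  rw [← h, rpow_sub_one hd.ne', rpow_sub hd, rpow_two]
  field_simp

theorem integral_abs_rpow_cauchyMeasure {l d : ℝ} (hl₀ : -1 < l) (hl₁ : l < 1) (hd : 0 < d) :
    ∫ x, |x| ^ l ∂_root_.cauchyMeasure d = d ^ l / cos (π * l / 2) := by
  have hdensity : ∀ x : ℝ, (ENNReal.ofReal (d / (π * (x ^ 2 + d ^ 2)))).toReal • |x| ^ l
      = d / π * (|x| ^ l / (|x| ^ 2 + d ^ 2)) := fun x => by
    rw [ENNReal.toReal_ofReal (by positivity), sq_abs, smul_eq_mul]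
    field_simp
  rw [_root_.cauchyMeasure, integral_withDensity_eq_integral_toReal_smul (by fun_prop)
      (ae_of_all _ fun _ => ENNReal.ofReal_lt_top), funext hdensity, integral_const_mul,
    integral_comp_abs (f := fun x => x ^ l / (x ^ 2 + d ^ 2)),
    integral_rpow_div_sq_add_sq hl₀ hl₁ hd, rpow_sub_one hd.ne']
  field_simp

theorem integral_prod_abs_rpow_of_iIndepFun_cauchy {Ω ι : Type*} [MeasurableSpace Ω]
    {μ : Measure Ω} [Fintype ι] {X : ι → Ω → ℝ} {l d : ℝ} (hl₀ : -1 < l) (hl₁ : l < 1)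
    (hd : 0 < d) (hmeas : ∀ i, AEMeasurable (X i) μ) (hindep : iIndepFun X μ)
    (hlaw : ∀ i, μ.map (X i) = _root_.cauchyMeasure d) :
    ∫ ω, ∏ i, |X i ω| ^ l ∂μ = (d ^ l / cos (π * l / 2)) ^ Fintype.card ι := by
  have hf : Measurable fun x : ℝ => |x| ^ l := by fun_prop
  have hmoment : ∀ i, ∫ ω, |X i ω| ^ l ∂μ = d ^ l / cos (π * l / 2) := fun i => by
    rw [← integral_abs_rpow_cauchyMeasure hl₀ hl₁ hd, ← hlaw i,
      integral_map (hmeas i) hf.aestronglyMeasurable]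
  rw [hindep.integral_fun_prod_comp hmeas fun _ => hf.aestronglyMeasurable,
    Finset.prod_congr rfl fun i _ => hmoment i, Finset.prod_const, Finset.card_univ]

theorem variance_eq_sub_of_integral_sq_ne_zero {Ω : Type*} [MeasurableSpace Ω]
    {μ : Measure Ω} [IsProbabilityMeasure μ] {Y : Ω → ℝ} (hY : AEStronglyMeasurable Y μ)
    (h : ∫ ω, Y ω ^ 2 ∂μ ≠ 0) :
    variance Y μ = ∫ ω, Y ω ^ 2 ∂μ - (∫ ω, Y ω ∂μ) ^ 2 :=
  -- the Bochner integral of a non-integrable function is `0`, so `Y ^ 2` is integrable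
  variance_eq_sub ((memLp_two_iff_integrable_sq hY).2 (.of_integral_ne_zero h))

/-- The variance of the bias-corrected geometric mean estimator:
`Var(d̂) = d² (cos^{2k}(π/(2k)) / cos^k(π/k) − 1)` for `k > 2`. -/
theorem geometric_mean_estimator_variance
    {Ω : Type*} [MeasurableSpace Ω] (μ : Measure Ω) [IsProbabilityMeasure μ]
    (d : ℝ) (hd : 0 < d) (k : ℕ) (hk : 2 < k)
    (X : Fin k → Ω → ℝ) (hmeas : ∀ i, Measurable (X i))
    (hindep : iIndepFun X μ)
    (hlaw : ∀ i, Measure.map (X i) μ = _root_.cauchyMeasure d) :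
    variance (fun ω => Real.cos (π / (2 * k)) ^ k * ∏ j, |X j ω| ^ ((k : ℝ)⁻¹)) μ
      = d ^ 2 * (Real.cos (π / (2 * k)) ^ (2 * k) / Real.cos (π / k) ^ k - 1) := by
  have hkR : (2 : ℝ) < k := by exact_mod_cast hk
  set c := cos (π / (2 * k))
  set p : ℝ := (k : ℝ)⁻¹
  have hp₀ : 0 < p := by positivity
  have hp₁ : p * 2 < 1 := by rw [← div_eq_inv_mul, div_lt_one (by linarith)]; exact hkR
  have hc : 0 < c := cos_pi_div_pos (by linarith)
  have hc₂ : 0 < cos (π / k) := cos_pi_div_pos hkR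
  have hX : ∀ i, AEMeasurable (X i) μ := fun i => (hmeas i).aemeasurable
  have hE₁ : ∫ ω, ∏ j, |X j ω| ^ p ∂μ = (d ^ p / c) ^ k := by
    rw [integral_prod_abs_rpow_of_iIndepFun_cauchy (by linarith) (by linarith) hd hX hindep
      hlaw, Fintype.card_fin]
    simp only [c, p]
    field_simp
  have hE₂ : ∫ ω, ∏ j, |X j ω| ^ (p * 2) ∂μ = ((d ^ p) ^ 2 / cos (π / k)) ^ k := by
    rw [integral_prod_abs_rpow_of_iIndepFun_cauchy (by linarith) hp₁ hd hX hindep hlaw,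
      Fintype.card_fin, ← rpow_mul_natCast hd.le]
    simp only [p]
    field_simp
    norm_num
  have hsq : ∀ ω, (c ^ k * ∏ j, |X j ω| ^ p) ^ 2 = (c ^ k) ^ 2 * ∏ j, |X j ω| ^ (p * 2) :=
    fun ω => by
      rw [mul_pow, ← Finset.prod_pow]
      exact congrArg _ <|
        Finset.prod_congr rfl fun j _ => (rpow_mul_natCast (abs_nonneg _) p 2).symm
  have hdp : (d ^ p) ^ k = d := rpow_inv_natCast_pow hd.le (by omega)
  rw [variance_eq_sub_of_integral_sq_ne_zero (Measurable.aestronglyMeasurable (by fun_prop))]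
  all_goals simp only [hsq, integral_const_mul, hE₁, hE₂]
  · rw [div_pow, div_pow, pow_right_comm _ 2 k, hdp, pow_mul']
    field_simp
  · positivity
end

section
/- For k → ∞, cos^{2k}(π/(2k)) / cos^k(π/k) = 1 + (π²/4)·(1/k) + (π⁴/32)·(1/k²) + O(1/k³); in particular, k·(cos^{2k}(π/(2k))/cos^k(π/k) − 1) → π²/4 as k → ∞. -/
open Real Filter

lemma log_cos_approx {x : ℝ} (hx : |x| ≤ 1/2) :
    |Real.log (Real.cos x) + x ^ 2 / 2| ≤ 3 * x ^ 4 := by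
  have hx1 : |x| ≤ 1 := hx.trans (by norm_num)
  have hr := Real.cos_bound hx1
  have hx4 : |x| ^ 4 = x ^ 4 := by
    rw [← abs_pow, abs_of_nonneg (by positivity)]
  rw [hx4] at hr
  have hx20 : (0:ℝ) ≤ x ^ 2 := sq_nonneg x
  have hx2 : x ^ 2 ≤ 1/4 := by
    have h := pow_le_pow_left₀ (abs_nonneg x) hx 2
    rw [← abs_pow, abs_of_nonneg (by positivity)] at h
    linarith [h]
  have hx40 : (0:ℝ) ≤ x ^ 4 := by positivity
  have hx42 : x ^ 4 ≤ 1/16 := by nlinarith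
  set r : ℝ := Real.cos x - (1 - x ^ 2 / 2) with hrdef
  set u : ℝ := x ^ 2 / 2 - r with hudef
  have hcos : Real.cos x = 1 - u := by rw [hudef, hrdef]; ring
  have hrabs : |r| ≤ x ^ 4 * (5/96) := hr
  have hrle := abs_le.mp hrabs
  have hub : |u| ≤ x ^ 2 / 2 + x ^ 4 * (5/96) := by
    rw [abs_le]
    constructor <;> [linarith [hrle.1, hrle.2]; linarith [hrle.1, hrle.2]]
  have hu : |u| ≤ 1/4 := by
    refine hub.trans ?_
    linarith
  have hulth : |u| < 1 := lt_of_le_of_lt hu (by norm_num)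
  have key := Real.abs_log_sub_add_sum_range_le hulth 1
  simp only [Finset.sum_range_one, pow_one, Nat.cast_zero, zero_add, div_one] at key
  -- key : |u + log (1 - u)| ≤ |u| ^ 2 / (1 - |u|)
  have hq : |u| ^ 2 / (1 - |u|) ≤ 2 * u ^ 2 := by
    rw [div_le_iff₀ (by linarith)]
    have hsq : |u| ^ 2 = u ^ 2 := sq_abs u
    rw [hsq]
    nlinarith [mul_nonneg (sq_nonneg u) (by linarith : (0:ℝ) ≤ 1/4 - |u|), sq_nonneg u]
  have hu2 : u ^ 2 ≤ (x ^ 2 / 2 + x ^ 4 * (5/96)) ^ 2 := by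
    have h := pow_le_pow_left₀ (abs_nonneg u) hub 2
    rwa [sq_abs] at h
  have heq : Real.log (Real.cos x) + x ^ 2 / 2 = (u + Real.log (1 - u)) + r := by
    rw [hcos]; ring
  have h6 : x ^ 2 * x ^ 4 ≤ (1/4) * x ^ 4 := mul_le_mul_of_nonneg_right hx2 hx40
  have h8 : x ^ 4 * x ^ 4 ≤ (1/16) * x ^ 4 := mul_le_mul_of_nonneg_right hx42 hx40
  calc |Real.log (Real.cos x) + x ^ 2 / 2|
      ≤ |u + Real.log (1 - u)| + |r| := by rw [heq]; exact abs_add_le _ _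
    _ ≤ 2 * u ^ 2 + x ^ 4 * (5/96) := add_le_add (key.trans hq) hrabs
    _ ≤ 3 * x ^ 4 := by
        have hexp : (x ^ 2 / 2 + x ^ 4 * (5/96)) ^ 2
            = x ^ 4 / 4 + x ^ 2 * x ^ 4 * (5/96) + x ^ 4 * x ^ 4 * (25/9216) := by ring
        rw [hexp] at hu2
        linarith [hu2, h6, h8, hx40]

set_option maxHeartbeats 2000000 in
lemma main_bound : ∀ k : ℝ, 11 ≤ k →
    |Real.cos (π / (2 * k)) ^ (2 * k) / Real.cos (π / k) ^ k
      - (1 + π ^ 2 / (4 * k) + π ^ 4 / (32 * k ^ 2))| ≤ 7000 / k ^ 3 := by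
  intro k hk
  have hk0 : (0:ℝ) < k := by linarith
  have hkne : k ≠ 0 := ne_of_gt hk0
  have hpi4 : π ≤ 4 := Real.pi_le_four
  have hpi0 : 0 < π := Real.pi_pos
  have hpi3 : 3 < π := Real.pi_gt_three
  have hx1 : |π / (2 * k)| ≤ 1/2 := by
    rw [abs_of_pos (by positivity), div_le_iff₀ (by positivity)]; nlinarith
  have hx2 : |π / k| ≤ 1/2 := by
    rw [abs_of_pos (by positivity), div_le_iff₀ hk0]; nlinarith
  obtain ⟨hx1a, hx1b⟩ := abs_le.mp hx1
  obtain ⟨hx2a, hx2b⟩ := abs_le.mp hx2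
  have hp1 : 0 < π / (2 * k) := by positivity
  have hp2 : 0 < π / k := by positivity
  have hc1 : 0 < Real.cos (π / (2 * k)) :=
    Real.cos_pos_of_mem_Ioo ⟨by linarith, by linarith⟩
  have hc2 : 0 < Real.cos (π / k) :=
    Real.cos_pos_of_mem_Ioo ⟨by linarith, by linarith⟩
  set L : ℝ := 2 * k * Real.log (Real.cos (π / (2 * k))) - k * Real.log (Real.cos (π / k))
    with hLdef
  have hfeq : Real.cos (π / (2 * k)) ^ (2 * k) / Real.cos (π / k) ^ k = Real.exp L := by
    rw [Real.rpow_def_of_pos hc1, Real.rpow_def_of_pos hc2, ← Real.exp_sub, hLdef]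
    congr 1; ring
  -- log cos bounds
  have hb1' := log_cos_approx hx1
  have hb2' := log_cos_approx hx2
  have e11 : (π / (2 * k)) ^ 2 / 2 = π ^ 2 / (8 * k ^ 2) := by
    field_simp; ring
  have e12 : 3 * (π / (2 * k)) ^ 4 = 3 * (π ^ 4 / (16 * k ^ 4)) := by
    field_simp; ring
  have e21 : (π / k) ^ 2 / 2 = π ^ 2 / (2 * k ^ 2) := by
    field_simp
  have e22 : 3 * (π / k) ^ 4 = 3 * (π ^ 4 / k ^ 4) := by
    rw [div_pow]
  rw [e11, e12] at hb1'
  rw [e21, e22] at hb2'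
  set a : ℝ := π ^ 2 / (4 * k) with hadef
  set E1 : ℝ := Real.log (Real.cos (π / (2 * k))) + π ^ 2 / (8 * k ^ 2) with hE1def
  set E2 : ℝ := Real.log (Real.cos (π / k)) + π ^ 2 / (2 * k ^ 2) with hE2def
  have hLsplit : L - a = 2 * k * E1 - k * E2 := by
    rw [hLdef, hadef, hE1def, hE2def]; field_simp; ring
  have hm1 : |2 * k * E1| ≤ 3 * π ^ 4 / (8 * k ^ 3) := by
    rw [abs_mul, abs_of_pos (by positivity : (0:ℝ) < 2 * k)]
    calc 2 * k * |E1| ≤ 2 * k * (3 * (π ^ 4 / (16 * k ^ 4))) :=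
          mul_le_mul_of_nonneg_left hb1' (by positivity)
      _ = 3 * π ^ 4 / (8 * k ^ 3) := by field_simp; ring
  have hm2 : |k * E2| ≤ 3 * π ^ 4 / k ^ 3 := by
    rw [abs_mul, abs_of_pos hk0]
    calc k * |E2| ≤ k * (3 * (π ^ 4 / k ^ 4)) :=
          mul_le_mul_of_nonneg_left hb2' (by positivity)
      _ = 3 * π ^ 4 / k ^ 3 := by field_simp
  have hpik3 : (0:ℝ) ≤ π ^ 4 / k ^ 3 := by positivity
  have hLa : |L - a| ≤ 4 * π ^ 4 / k ^ 3 := by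
    calc |L - a| = |2 * k * E1 - k * E2| := by rw [hLsplit]
      _ ≤ |2 * k * E1| + |k * E2| := abs_sub _ _
      _ ≤ 3 * π ^ 4 / (8 * k ^ 3) + 3 * π ^ 4 / k ^ 3 := add_le_add hm1 hm2
      _ = (27/8 * π ^ 4) / k ^ 3 := by ring
      _ ≤ 4 * π ^ 4 / k ^ 3 := by
          gcongr
          linarith [pow_pos hpi0 4]
  have hpi2 : π ^ 2 ≤ 16 := by nlinarith
  have hpi4' : π ^ 4 ≤ 256 := by nlinarith [hpi2, sq_nonneg π]
  have hpi6 : π ^ 6 ≤ 4096 := by nlinarith [hpi2, hpi4', pow_nonneg hpi0.le 2, pow_nonneg hpi0.le 4]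
  have hk3 : (0:ℝ) < k ^ 3 := by positivity
  have hk3' : (1331:ℝ) ≤ k ^ 3 := by
    have h := pow_le_pow_left₀ (by norm_num : (0:ℝ) ≤ 11) hk 3
    norm_num at h
    linarith
  have hLa1 : |L - a| ≤ 1 := by
    refine hLa.trans ?_
    rw [div_le_one hk3]; linarith
  have ha0 : 0 ≤ a := by positivity
  have ha1 : a ≤ 1 := by
    rw [hadef, div_le_one (by positivity)]; linarith
  -- |exp L - exp a|
  have hexp1 : |Real.exp L - Real.exp a| ≤ 24 * π ^ 4 / k ^ 3 := by
    have h1 : Real.exp L - Real.exp a = Real.exp a * (Real.exp (L - a) - 1) := by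
      rw [mul_sub, mul_one, ← Real.exp_add]
      congr 2; ring
    have h2 : |Real.exp (L - a) - 1| ≤ 2 * |L - a| := Real.abs_exp_sub_one_le hLa1
    have h3 : Real.exp a ≤ 3 := by
      calc Real.exp a ≤ Real.exp 1 := Real.exp_le_exp.2 ha1
        _ ≤ 3 := by linarith [Real.exp_one_lt_d9]
    have h4 : 0 < Real.exp a := Real.exp_pos a
    calc |Real.exp L - Real.exp a| = Real.exp a * |Real.exp (L - a) - 1| := by
          rw [h1, abs_mul, abs_of_pos h4]
      _ ≤ 3 * (2 * |L - a|) := by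
          apply mul_le_mul h3 h2 (abs_nonneg _) (by norm_num)
      _ ≤ 3 * (2 * (4 * π ^ 4 / k ^ 3)) := by linarith [hLa]
      _ = 24 * π ^ 4 / k ^ 3 := by ring
  -- |exp a - (1 + a + a^2/2)|
  have hexp2 : |Real.exp a - (1 + a + a ^ 2 / 2)| ≤ a ^ 3 := by
    have hb := Real.exp_bound (x := a) (by rwa [abs_of_nonneg ha0]) (n := 3) (by norm_num)
    have hsum : ∑ m ∈ Finset.range 3, a ^ m / m.factorial = 1 + a + a ^ 2 / 2 := by
      simp [Finset.sum_range_succ, Nat.factorial]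
    rw [hsum, abs_of_nonneg ha0] at hb
    refine hb.trans ?_
    have h30 : (0:ℝ) ≤ a ^ 3 := pow_nonneg ha0 3
    have h5 : ((Nat.succ 3 : ℕ) : ℝ) / ((Nat.factorial 3 : ℕ) * ((3:ℕ):ℝ)) = 2/9 := by
      norm_num [Nat.factorial]
    rw [h5]
    nlinarith
  have ha3 : a ^ 3 = π ^ 6 / (64 * k ^ 3) := by
    rw [hadef, div_pow]
    field_simp; ring
  have hP : 1 + a + a ^ 2 / 2 = 1 + π ^ 2 / (4 * k) + π ^ 4 / (32 * k ^ 2) := by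
    rw [hadef]; field_simp; ring
  calc |Real.cos (π / (2 * k)) ^ (2 * k) / Real.cos (π / k) ^ k
        - (1 + π ^ 2 / (4 * k) + π ^ 4 / (32 * k ^ 2))|
      = |(Real.exp L - Real.exp a) + (Real.exp a - (1 + a + a ^ 2 / 2))| := by
        rw [hfeq, ← hP]; congr 1; ring
    _ ≤ |Real.exp L - Real.exp a| + |Real.exp a - (1 + a + a ^ 2 / 2)| := abs_add_le _ _
    _ ≤ 24 * π ^ 4 / k ^ 3 + π ^ 6 / (64 * k ^ 3) := by
        exact add_le_add hexp1 (hexp2.trans (le_of_eq ha3))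
    _ = (24 * π ^ 4 + π ^ 6 / 64) / k ^ 3 := by ring
    _ ≤ 7000 / k ^ 3 := by
        gcongr
        linarith [pow_nonneg hpi0.le 6]

/-- Asymptotics of `cos^{2k}(π/(2k)) / cos^k(π/k)` as `k → ∞`:
it equals `1 + (π²/4)/k + (π⁴/32)/k² + O(1/k³)`; in particular
`k (cos^{2k}(π/(2k))/cos^k(π/k) − 1) → π²/4`. -/
theorem cos_ratio_asymptotics :
    (∃ C : ℝ, ∀ᶠ k : ℝ in atTop,
      |Real.cos (π / (2 * k)) ^ (2 * k) / Real.cos (π / k) ^ k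
        - (1 + π ^ 2 / (4 * k) + π ^ 4 / (32 * k ^ 2))| ≤ C / k ^ 3) ∧
    Tendsto (fun k : ℝ =>
        k * (Real.cos (π / (2 * k)) ^ (2 * k) / Real.cos (π / k) ^ k - 1))
      atTop (nhds (π ^ 2 / 4)) := by
  constructor
  · exact ⟨7000, eventually_atTop.2 ⟨11, main_bound⟩⟩
  · rw [← tendsto_sub_nhds_zero_iff]
    apply squeeze_zero_norm' (a := fun k : ℝ => 7000 / k ^ 2 + π ^ 4 / (32 * k))
    · filter_upwards [eventually_ge_atTop (11:ℝ)] with k hk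
      have hk0 : (0:ℝ) < k := by linarith
      have hkne : k ≠ 0 := ne_of_gt hk0
      have hm := main_bound k hk
      have hsplit : k * (Real.cos (π / (2 * k)) ^ (2 * k) / Real.cos (π / k) ^ k - 1)
            - π ^ 2 / 4
          = k * (Real.cos (π / (2 * k)) ^ (2 * k) / Real.cos (π / k) ^ k
              - (1 + π ^ 2 / (4 * k) + π ^ 4 / (32 * k ^ 2))) + π ^ 4 / (32 * k) := by
        field_simp; ring
      rw [Real.norm_eq_abs, hsplit]
      have h2 : k * (7000 / k ^ 3) = 7000 / k ^ 2 := by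
        field_simp
      calc |k * (Real.cos (π / (2 * k)) ^ (2 * k) / Real.cos (π / k) ^ k
              - (1 + π ^ 2 / (4 * k) + π ^ 4 / (32 * k ^ 2))) + π ^ 4 / (32 * k)|
          ≤ |k| * |Real.cos (π / (2 * k)) ^ (2 * k) / Real.cos (π / k) ^ k
              - (1 + π ^ 2 / (4 * k) + π ^ 4 / (32 * k ^ 2))| + π ^ 4 / (32 * k) := by
            refine (abs_add_le _ _).trans ?_
            rw [abs_mul, abs_of_pos (by positivity : (0:ℝ) < π ^ 4 / (32 * k))]
        _ ≤ k * (7000 / k ^ 3) + π ^ 4 / (32 * k) := by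
            rw [abs_of_pos hk0]
            have := mul_le_mul_of_nonneg_left hm hk0.le
            linarith
        _ = 7000 / k ^ 2 + π ^ 4 / (32 * k) := by rw [h2]
    · have h1 : Tendsto (fun k : ℝ => 7000 / k ^ 2) atTop (nhds 0) :=
        tendsto_const_nhds.div_atTop (tendsto_pow_atTop (by norm_num))
      have h2 : Tendsto (fun k : ℝ => π ^ 4 / (32 * k)) atTop (nhds 0) :=
        tendsto_const_nhds.div_atTop (tendsto_id.const_mul_atTop (by norm_num))
      simpa using h1.add h2
end

section
/- If x is Cauchy with location 0 and scale d > 0, then E((x² − d²)/(x² + d²)²) = −1/(4d²). -/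
open Real MeasureTheory Filter Topology

/-! The substitution x = d t turns the integral into `-(π d²)⁻¹ ∫ (1 - t²)/(1 + t²)³ dt`, and
`t/(2(1+t²)²) + t/(4(1+t²)) + arctan t / 4` is an antiderivative of `(1 - t²)/(1 + t²)³`
tending to `±π/8` at `±∞`, so that integral is `π/4`. -/

lemma hasDerivAt_div_one_add_sq_pow (n : ℕ) (t : ℝ) :
    HasDerivAt (fun t : ℝ => t / (1 + t ^ 2) ^ n)
      ((1 + (1 - 2 * n) * t ^ 2) / (1 + t ^ 2) ^ (n + 1)) t := by
  have hpos : 0 < 1 + t ^ 2 := by positivity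
  have hbase : HasDerivAt (fun t : ℝ => 1 + t ^ 2) (2 * t) t := by
    simpa using (hasDerivAt_pow 2 t).const_add 1
  have hpow : HasDerivAt (fun t : ℝ => (1 + t ^ 2) ^ n) (n * (1 + t ^ 2) ^ (n - 1) * (2 * t)) t :=
    hbase.pow n
  refine ((hasDerivAt_id' t).div hpow (pow_ne_zero n hpos.ne')).congr_deriv ?_
  cases n with
  | zero => field_simp; ring
  | succ n =>
    rw [Nat.cast_succ, add_tsub_cancel_right]
    field_simp
    ring

lemma norm_div_one_add_sq_pow_le {n : ℕ} (hn : n ≠ 0) (t : ℝ) :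
    ‖t / (1 + t ^ 2) ^ n‖ ≤ ‖t‖⁻¹ := by
  rcases eq_or_ne t 0 with rfl | ht
  · simp
  have hpos : 0 < 1 + t ^ 2 := by positivity
  have hpow : 1 + t ^ 2 ≤ (1 + t ^ 2) ^ n := le_self_pow₀ (by nlinarith) hn
  rw [norm_div, norm_pow, Real.norm_of_nonneg hpos.le, Real.norm_eq_abs,
    div_le_iff₀ (by positivity)]
  calc |t|⁻¹ * (1 + t ^ 2) ^ n ≥ |t|⁻¹ * (1 + t ^ 2) := by gcongr
    _ ≥ |t| := by
      rw [← sq_abs t]; field_simp; nlinarith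

lemma tendsto_div_one_add_sq_pow_cocompact {n : ℕ} (hn : n ≠ 0) :
    Tendsto (fun t : ℝ => t / (1 + t ^ 2) ^ n) (cocompact ℝ) (𝓝 0) :=
  squeeze_zero_norm (norm_div_one_add_sq_pow_le hn)
    (tendsto_inv_atTop_zero.comp tendsto_norm_cocompact_atTop)

lemma integrable_one_sub_sq_div_one_add_sq_pow_three :
    Integrable fun t : ℝ => (1 - t ^ 2) / (1 + t ^ 2) ^ 3 := by
  refine integrable_inv_one_add_sq.mono' (by fun_prop : Measurable _).aestronglyMeasurable
    (Eventually.of_forall fun t => ?_)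
  have hpos : 0 < 1 + t ^ 2 := by positivity
  rw [norm_div, norm_pow, Real.norm_of_nonneg hpos.le, Real.norm_eq_abs,
    div_le_iff₀ (by positivity), abs_le]
  constructor <;> field_simp <;> nlinarith [sq_nonneg t]

lemma integral_one_sub_sq_div_one_add_sq_pow_three :
    ∫ t : ℝ, (1 - t ^ 2) / (1 + t ^ 2) ^ 3 = π / 4 := by
  set G : ℝ → ℝ := fun t => t / (1 + t ^ 2) ^ 2 / 2 + t / (1 + t ^ 2) / 4 + arctan t / 4
  have hG : ∀ t, HasDerivAt G ((1 - t ^ 2) / (1 + t ^ 2) ^ 3) t := by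
    intro t
    have h1 := hasDerivAt_div_one_add_sq_pow 1 t
    have h2 := hasDerivAt_div_one_add_sq_pow 2 t
    simp only [pow_one] at h1
    refine (((h2.div_const 2).add (h1.div_const 4)).add
      ((hasDerivAt_arctan t).div_const 4)).congr_deriv ?_
    have hpos : 0 < 1 + t ^ 2 := by positivity
    field_simp
    ring
  have hlim : ∀ {l : Filter ℝ} {a : ℝ}, l ≤ cocompact ℝ → Tendsto arctan l (𝓝 a) →
      Tendsto G l (𝓝 (a / 4)) := by
    intro l a hl ha
    have h1 := (tendsto_div_one_add_sq_pow_cocompact one_ne_zero).mono_left hl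
    have h2 := (tendsto_div_one_add_sq_pow_cocompact two_ne_zero).mono_left hl
    simp only [pow_one] at h1
    simpa using ((h2.div_const 2).add (h1.div_const 4)).add (ha.div_const 4)
  have hbot := hlim atBot_le_cocompact (tendsto_arctan_atBot.mono_right nhdsWithin_le_nhds)
  have htop := hlim atTop_le_cocompact (tendsto_arctan_atTop.mono_right nhdsWithin_le_nhds)
  rw [integral_of_hasDerivAt_of_tendsto hG integrable_one_sub_sq_div_one_add_sq_pow_three hbot htop]
  ring

/-- For a Cauchy(0, d) random variable, `E((x²−d²)/(x²+d²)²) = −1/(4d²)`. -/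
theorem cauchy_expectation_identity (d : ℝ) (hd : 0 < d) :
    ∫ x : ℝ, (d / (π * (x ^ 2 + d ^ 2))) * ((x ^ 2 - d ^ 2) / (x ^ 2 + d ^ 2) ^ 2)
      = -(1 / (4 * d ^ 2)) := by
  have hrescale : ∀ x : ℝ, (d / (π * (x ^ 2 + d ^ 2))) * ((x ^ 2 - d ^ 2) / (x ^ 2 + d ^ 2) ^ 2)
      = -(π * d ^ 3)⁻¹ * ((1 - (x / d) ^ 2) / (1 + (x / d) ^ 2) ^ 3) := by
    intro x
    have hpos : 0 < x ^ 2 + d ^ 2 := by positivity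
    field_simp
    ring
  simp_rw [hrescale]
  rw [integral_const_mul, Measure.integral_comp_div (fun t => (1 - t ^ 2) / (1 + t ^ 2) ^ 3),
    integral_one_sub_sq_div_one_add_sq_pow_three, abs_of_pos hd, smul_eq_mul]
  field_simp
end

section
/- The function λ ↦ sin²(λπ/2)/(λ²·cos(λπ)) defined for 0 < |λ| < 1/2 tends to π²/4 as λ → 0, and is increasing in |λ| (hence ≥ π²/4 on its domain), diverging to ∞ as |λ| → 1/2. -/
/-!
With `t = λπ/2` and `cos 2t = cos² t (1 - tan² t)`, the factor becomes
`(π²/4) · (tan t / t)² / (1 - tan² t)`. On `(0, π/4)` the function `tan t / t` is increasing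
(its derivative has the sign of `2t - sin 2t`) and exceeds `1`, while `1 - tan² t` decreases
from `1` to `0`; this gives monotonicity and the lower bound. Both limits are read off the form
`(π/2 · sinc t)² / cos 2t`, whose numerator is continuous and positive near `t = 0` and
`t = π/4`, and whose denominator tends to `1` and to `0⁺` respectively. The factor is even.
-/

open Real Filter

/-- The asymptotic variance factor of the fractional moment estimator. -/
noncomputable def varFactor (l : ℝ) : ℝ :=
  Real.sin (l * π / 2) ^ 2 / (l ^ 2 * Real.cos (l * π))

open Set Topology

lemma tan_div_self_strictMonoOn : StrictMonoOn (fun t => tan t / t) (Ioo 0 (π / 2)) := by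
  refine strictMonoOn_of_deriv_pos (convex_Ioo _ _) ?_ fun t ht => ?_
  · exact (continuousOn_tan_Ioo.mono (Ioo_subset_Ioo_left (by linarith [pi_pos]))).div
      continuousOn_id fun t ht => ht.1.ne'
  rw [interior_Ioo] at ht
  have ht0 := ht.1
  have hcos : 0 < cos t := cos_pos_of_mem_Ioo ⟨by linarith [pi_pos], ht.2⟩
  rw [((hasDerivAt_tan hcos.ne').fun_div (hasDerivAt_id' t) ht0.ne').deriv, tan_eq_sin_div_cos]
  have hsc : sin t * cos t < t := by
    have := sin_lt (by linarith : 0 < 2 * t)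
    rw [sin_two_mul] at this
    linarith
  rw [div_pos_iff_of_pos_right (by positivity)]
  field_simp
  nlinarith

lemma tan_mem_Ioo_zero_one {t : ℝ} (ht : t ∈ Ioo 0 (π / 4)) : tan t ∈ Ioo 0 1 := by
  have hπ := pi_pos
  refine ⟨tan_pos_of_pos_of_lt_pi_div_two ht.1 (by linarith [ht.2]), ?_⟩
  rw [← tan_pi_div_four]
  exact strictMonoOn_tan ⟨by linarith [ht.1], by linarith [ht.2]⟩ ⟨by linarith, by linarith⟩ ht.2

noncomputable def varFactorTan (t : ℝ) : ℝ := (tan t / t) ^ 2 / (1 - tan t ^ 2)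

lemma varFactorTan_strictMonoOn : StrictMonoOn varFactorTan (Ioo 0 (π / 4)) := by
  intro s hs t ht hst
  have hsub : Ioo 0 (π / 4) ⊆ Ioo 0 (π / 2) := Ioo_subset_Ioo_right (by linarith [pi_pos])
  have hsub' : Ioo 0 (π / 2) ⊆ Ioo (-(π / 2)) (π / 2) :=
    Ioo_subset_Ioo_left (by linarith [pi_pos])
  have hdiv := tan_div_self_strictMonoOn (hsub hs) (hsub ht) hst
  have htan := strictMonoOn_tan (hsub' (hsub hs)) (hsub' (hsub ht)) hst
  have hs' := tan_mem_Ioo_zero_one hs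
  have ht' := tan_mem_Ioo_zero_one ht
  have : 0 < tan s / s := div_pos hs'.1 hs.1
  have : 0 < 1 - tan t ^ 2 := by nlinarith [ht'.1, ht'.2]
  unfold varFactorTan
  gcongr ?_ ^ 2 / (1 - ?_ ^ 2)
  exact hs'.1.le

lemma one_lt_varFactorTan {t : ℝ} (ht : t ∈ Ioo 0 (π / 4)) : 1 < varFactorTan t := by
  have ht' := tan_mem_Ioo_zero_one ht
  have h1 : 1 < tan t / t := (one_lt_div ht.1).2 (lt_tan ht.1 (by linarith [ht.2, pi_pos]))
  rw [varFactorTan, one_lt_div (by nlinarith [ht'.1, ht'.2])]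
  nlinarith [ht'.1]

lemma varFactor_abs (l : ℝ) : varFactor |l| = varFactor l := by
  rcases abs_choice l with h | h <;> simp [h, varFactor, neg_div]

lemma varFactor_eq_sinc {l : ℝ} (hl : l ≠ 0) :
    varFactor l = (π / 2 * sinc (l * π / 2)) ^ 2 / cos (l * π) := by
  rw [varFactor, sinc_of_ne_zero (by positivity)]
  field_simp

lemma varFactor_eq_varFactorTan {l : ℝ} (hl : l ≠ 0) (hcos : cos (l * π / 2) ≠ 0) :
    varFactor l = π ^ 2 / 4 * varFactorTan (l * π / 2) := by
  have hcos2 : cos (l * π) = cos (l * π / 2) ^ 2 * (1 - tan (l * π / 2) ^ 2) := by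
    rw [tan_eq_sin_div_cos, show l * π = 2 * (l * π / 2) by ring, cos_two_mul]
    field_simp
    linear_combination cos_sq_add_sin_sq (l * π / 2)
  rw [varFactor, varFactorTan, hcos2, tan_eq_sin_div_cos]
  field_simp
  ring

lemma mul_pi_div_two_mem_Ioo {l : ℝ} (hl : l ∈ Ioo 0 (1 / 2)) : l * π / 2 ∈ Ioo 0 (π / 4) :=
  ⟨by have := hl.1; positivity, by nlinarith [hl.2, pi_pos]⟩

lemma varFactor_eq_varFactorTan_of_mem_Ioo {l : ℝ} (hl : l ∈ Ioo 0 (1 / 2)) :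
    varFactor l = π ^ 2 / 4 * varFactorTan (l * π / 2) := by
  have ht := mul_pi_div_two_mem_Ioo hl
  refine varFactor_eq_varFactorTan hl.1.ne' (cos_pos_of_mem_Ioo ⟨?_, ?_⟩).ne' <;>
    linarith [ht.1, ht.2, pi_pos]

lemma varFactor_strictMonoOn : StrictMonoOn varFactor (Ioo 0 (1 / 2)) := by
  intro a ha b hb hab
  rw [varFactor_eq_varFactorTan_of_mem_Ioo ha, varFactor_eq_varFactorTan_of_mem_Ioo hb]
  gcongr
  exact varFactorTan_strictMonoOn (mul_pi_div_two_mem_Ioo ha) (mul_pi_div_two_mem_Ioo hb)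
    (by gcongr)

lemma pi_sq_div_four_lt_varFactor {l : ℝ} (hl : l ∈ Ioo 0 (1 / 2)) :
    π ^ 2 / 4 < varFactor l := by
  rw [varFactor_eq_varFactorTan_of_mem_Ioo hl]
  exact lt_mul_of_one_lt_right (by positivity) (one_lt_varFactorTan (mul_pi_div_two_mem_Ioo hl))

lemma tendsto_varFactor_nhdsNE_zero : Tendsto varFactor (𝓝[≠] 0) (𝓝 (π ^ 2 / 4)) := by
  have hlim : Tendsto (fun l => (π / 2 * sinc (l * π / 2)) ^ 2 / cos (l * π)) (𝓝 0)
      (𝓝 (π ^ 2 / 4)) := by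
    convert (by fun_prop (disch := simp) :
      ContinuousAt (fun l => (π / 2 * sinc (l * π / 2)) ^ 2 / cos (l * π)) 0).tendsto using 2
    simp only [zero_mul, zero_div, sinc_zero, cos_zero]
    ring
  exact (hlim.mono_left nhdsWithin_le_nhds).congr'
    (eventually_nhdsWithin_of_forall fun l hl => (varFactor_eq_sinc hl).symm)

lemma tendsto_varFactor_nhdsWithin_half : Tendsto varFactor (𝓝[Ioo 0 (1 / 2)] (1 / 2)) atTop := by
  have hπ := pi_pos
  have hcos : Tendsto (fun l => cos (l * π)) (𝓝[Ioo 0 (1 / 2)] (1 / 2)) (𝓝[>] 0) := by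
    refine tendsto_nhdsWithin_iff.2 ⟨?_, eventually_nhdsWithin_of_forall fun l hl => ?_⟩
    · refine ((by fun_prop : Continuous fun l => cos (l * π)).tendsto' _ _ ?_).mono_left
        nhdsWithin_le_nhds
      rw [one_div_mul_eq_div, cos_pi_div_two]
    · exact cos_pos_of_mem_Ioo ⟨by nlinarith [hl.1], by nlinarith [hl.2]⟩
  have hsinc : Tendsto (fun l => (π / 2 * sinc (l * π / 2)) ^ 2) (𝓝[Ioo 0 (1 / 2)] (1 / 2))
      (𝓝 ((π / 2 * sinc (1 / 2 * π / 2)) ^ 2)) :=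
    ((by fun_prop : Continuous fun l => (π / 2 * sinc (l * π / 2)) ^ 2).tendsto _).mono_left
      nhdsWithin_le_nhds
  have hpos : 0 < sinc (1 / 2 * π / 2) := by
    rw [sinc_of_ne_zero (by positivity)]
    exact div_pos (sin_pos_of_pos_of_lt_pi (by positivity) (by linarith)) (by positivity)
  refine (hsinc.pos_mul_atTop (by positivity) hcos.inv_tendsto_nhdsGT_zero).congr' ?_
  exact eventually_nhdsWithin_of_forall fun l hl => (varFactor_eq_sinc hl.1.ne').symm

/-- The function `λ ↦ sin²(λπ/2)/(λ² cos(λπ))` on `0 < |λ| < 1/2` tends to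
`π²/4` as `λ → 0`, is increasing in `|λ|` (hence `≥ π²/4` on its domain),
and diverges to `∞` as `|λ| → 1/2`. -/
theorem varFactor_properties :
    Tendsto varFactor (nhdsWithin 0 {0}ᶜ) (nhds (π ^ 2 / 4)) ∧
    (∀ l₁ l₂ : ℝ, 0 < |l₁| → |l₁| < |l₂| → |l₂| < 1 / 2 →
      varFactor l₁ < varFactor l₂) ∧
    (∀ l : ℝ, 0 < |l| → |l| < 1 / 2 → π ^ 2 / 4 ≤ varFactor l) ∧
    Tendsto (fun l : ℝ => varFactor l) (nhdsWithin (1 / 2) (Set.Ioo 0 (1 / 2)))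
      atTop := by
  refine ⟨tendsto_varFactor_nhdsNE_zero, fun l₁ l₂ h₀ h₁₂ h₂ => ?_, fun l h₀ h₁ => ?_,
    tendsto_varFactor_nhdsWithin_half⟩
  · rw [← varFactor_abs l₁, ← varFactor_abs l₂]
    exact varFactor_strictMonoOn ⟨h₀, h₁₂.trans h₂⟩ ⟨h₀.trans h₁₂, h₂⟩ h₁₂
  · rw [← varFactor_abs]
    exact (pi_sq_div_four_lt_varFactor ⟨h₀, h₁⟩).le
end

section
/- Let z follow an inverse Gaussian distribution with moment generating function E(e^{zt}) = exp(α(1 − (1 − 2βt)^{1/2})) for t < 1/(2β), where α, β > 0 and mean αβ = d. Then for every ε ≥ 0, P(z ≥ (1+ε)d) ≤ exp(−αε²/(2(1+ε))), and for 0 ≤ ε < 1, P(z ≤ (1−ε)d) ≤ exp(−αε²/(2(1−ε))). -/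
open Real MeasureTheory

/-- Chernoff tail bounds for an inverse Gaussian random variable `z` with
moment generating function `E(e^{zt}) = exp(α(1 − √(1 − 2βt)))` for
`t < 1/(2β)`, and mean `αβ = d`:
`P(z ≥ (1+ε)d) ≤ exp(−αε²/(2(1+ε)))` for `ε ≥ 0`, and
`P(z ≤ (1−ε)d) ≤ exp(−αε²/(2(1−ε)))` for `0 ≤ ε < 1`. -/
theorem inverse_gaussian_chernoff
    {Ω : Type*} [MeasurableSpace Ω] (μ : Measure Ω) [IsProbabilityMeasure μ]
    (z : Ω → ℝ) (α β d : ℝ) (hα : 0 < α) (hβ : 0 < β) (hd : α * β = d)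
    (hmgf : ∀ t : ℝ, t < 1 / (2 * β) →
      ∫ ω, Real.exp (z ω * t) ∂μ = Real.exp (α * (1 - Real.sqrt (1 - 2 * β * t)))) :
    (∀ ε : ℝ, 0 ≤ ε →
      μ {ω | (1 + ε) * d ≤ z ω}
        ≤ ENNReal.ofReal (Real.exp (-(α * ε ^ 2 / (2 * (1 + ε)))))) ∧
    (∀ ε : ℝ, 0 ≤ ε → ε < 1 →
      μ {ω | z ω ≤ (1 - ε) * d}
        ≤ ENNReal.ofReal (Real.exp (-(α * ε ^ 2 / (2 * (1 - ε)))))) := by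
  have hβ2 : (0:ℝ) < 2 * β := by linarith
  have hmgf' : ∀ t : ℝ, t < 1 / (2 * β) →
      ProbabilityTheory.mgf z μ t = Real.exp (α * (1 - Real.sqrt (1 - 2 * β * t))) := by
    intro t ht
    have : (fun ω => Real.exp (t * z ω)) = fun ω => Real.exp (z ω * t) := by
      ext ω; rw [mul_comm]
    rw [ProbabilityTheory.mgf, this]; exact hmgf t ht
  have hint : ∀ t : ℝ, t < 1 / (2 * β) →
      Integrable (fun ω => Real.exp (t * z ω)) μ := by
    intro t ht
    by_contra h
    have h0 := integral_undef h
    have : (fun ω => Real.exp (t * z ω)) = fun ω => Real.exp (z ω * t) := by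
      ext ω; rw [mul_comm]
    rw [this, hmgf t ht] at h0
    exact (Real.exp_pos _).ne' h0
  constructor
  · intro ε hε
    have h1ε : (0:ℝ) < 1 + ε := by linarith
    set t : ℝ := (1 - 1 / (1 + ε) ^ 2) / (2 * β) with htdef
    have htlt : t < 1 / (2 * β) := by
      rw [htdef, div_lt_div_iff₀ hβ2 hβ2]
      have : 0 < 1 / (1 + ε) ^ 2 := by positivity
      nlinarith
    have ht0 : 0 ≤ t := by
      apply div_nonneg _ hβ2.le
      have : 1 / (1 + ε) ^ 2 ≤ 1 := by
        rw [div_le_one (by positivity)]; nlinarith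
      linarith
    have hsq : 1 - 2 * β * t = (1 / (1 + ε)) ^ 2 := by
      rw [htdef]; field_simp; ring
    have hsqrt : Real.sqrt (1 - 2 * β * t) = 1 / (1 + ε) := by
      rw [hsq, Real.sqrt_sq (by positivity)]
    have hb := ProbabilityTheory.measure_ge_le_exp_mul_mgf (X := z) (μ := μ)
      ((1 + ε) * d) ht0 (hint t htlt)
    rw [hmgf' t htlt, hsqrt, ← Real.exp_add] at hb
    have hexp : -t * ((1 + ε) * d) + α * (1 - 1 / (1 + ε))
        = -(α * ε ^ 2 / (2 * (1 + ε))) := by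
      rw [← hd, htdef]; field_simp; ring
    rw [hexp] at hb
    calc μ {ω | (1 + ε) * d ≤ z ω}
        = ENNReal.ofReal (μ {ω | (1 + ε) * d ≤ z ω}).toReal :=
          (ENNReal.ofReal_toReal (measure_ne_top μ _)).symm
      _ ≤ ENNReal.ofReal (Real.exp (-(α * ε ^ 2 / (2 * (1 + ε))))) :=
          ENNReal.ofReal_le_ofReal hb
  · intro ε hε hε1
    have h1ε : (0:ℝ) < 1 - ε := by linarith
    set t : ℝ := (1 - 1 / (1 - ε) ^ 2) / (2 * β) with htdef
    have htlt : t < 1 / (2 * β) := by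
      rw [htdef, div_lt_div_iff₀ hβ2 hβ2]
      have : 0 < 1 / (1 - ε) ^ 2 := by positivity
      nlinarith
    have ht0 : t ≤ 0 := by
      apply div_nonpos_of_nonpos_of_nonneg _ hβ2.le
      have : 1 ≤ 1 / (1 - ε) ^ 2 := by
        rw [le_div_iff₀ (by positivity)]; nlinarith
      linarith
    have hsq : 1 - 2 * β * t = (1 / (1 - ε)) ^ 2 := by
      rw [htdef]; field_simp; ring
    have hsqrt : Real.sqrt (1 - 2 * β * t) = 1 / (1 - ε) := by
      rw [hsq, Real.sqrt_sq (by positivity)]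
    have hb := ProbabilityTheory.measure_le_le_exp_mul_mgf (X := z) (μ := μ)
      ((1 - ε) * d) ht0 (hint t htlt)
    rw [hmgf' t htlt, hsqrt, ← Real.exp_add] at hb
    have hexp : -t * ((1 - ε) * d) + α * (1 - 1 / (1 - ε))
        = -(α * ε ^ 2 / (2 * (1 - ε))) := by
      rw [← hd, htdef]; field_simp; ring
    rw [hexp] at hb
    calc μ {ω | z ω ≤ (1 - ε) * d}
        = ENNReal.ofReal (μ {ω | z ω ≤ (1 - ε) * d}).toReal :=
          (ENNReal.ofReal_toReal (measure_ne_top μ _)).symm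
      _ ≤ ENNReal.ofReal (Real.exp (-(α * ε ^ 2 / (2 * (1 - ε))))) :=
          ENNReal.ofReal_le_ofReal hb
end
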